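/- Let (L,E,R,∂₂,∂₁,{,}) be a 2-crossed module of commutative algebras, with E acting on L by e▶'l = {e⊗∂₂(l)}. Then the formula (e,l)▶*l' = e▶'l' + ll' defines an algebra action of the semidirect product E⋉L on L. -/

import Mathlib

/-- An action of a commutative `k`-algebra `R` on a commutative `k`-algebra `M`:
a `k`-bilinear map satisfying `r▶(mm') = (r▶m)m' = m(r▶m')` and `(rr')▶m = r▶(r'▶m)`. -/
structure AlgAction (k R M : Type*) [CommRing k] [CommRing R] [CommRing M]
    [Algebra k R] [Algebra k M] where
  act : R →ₗ[k] M →ₗ[k] M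
  a1 : ∀ (r : R) (m m' : M), act r (m * m') = act r m * m'
  a1' : ∀ (r : R) (m m' : M), act r (m * m') = m * act r m'
  a2 : ∀ (r r' : R) (m : M), act (r * r') m = act r (act r' m)

/-- A 2-crossed module of commutative `k`-algebras, with Peiffer lifting `lift e e' = {e ⊗ e'}`.
The action `e ▶' l` of `E` on `L` is `lift e (d2 l)` (axiom 2XM5 is definitional). -/
structure TwoCrossedModule (k L E R : Type*) [CommRing k] [CommRing L] [CommRing E] [CommRing R]
    [Algebra k L] [Algebra k E] [Algebra k R] where
  actE : AlgAction k R E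
  actL : AlgAction k R L
  d2 : L →ₗ[k] E
  d1 : E →ₗ[k] R
  d2_mul : ∀ l l' : L, d2 (l * l') = d2 l * d2 l'
  d1_mul : ∀ e e' : E, d1 (e * e') = d1 e * d1 e'
  comp : ∀ l : L, d1 (d2 l) = 0
  d1_act : ∀ (r : R) (e : E), d1 (actE.act r e) = r * d1 e
  d2_act : ∀ (r : R) (l : L), d2 (actL.act r l) = actE.act r (d2 l)
  lift : E →ₗ[k] E →ₗ[k] L
  axm1 : ∀ e e' : E, d2 (lift e e') = e * e' - actE.act (d1 e') e
  axm2 : ∀ l l' : L, lift (d2 l) (d2 l') = l * l'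
  axm3 : ∀ e e' e'' : E, lift e (e' * e'') = lift (e * e') e'' + actL.act (d1 e'') (lift e e')
  axm4 : ∀ (l : L) (e : E), lift (d2 l) e = lift e (d2 l) - actL.act (d1 e) l
  axm6a : ∀ (r : R) (e e' : E), actL.act r (lift e e') = lift (actE.act r e) e'
  axm6b : ∀ (r : R) (e e' : E), actL.act r (lift e e') = lift e (actE.act r e')

/-!
Write `e ▶' l = {e ⊗ ∂₂ l}`. Since `∂₁ ∂₂ = 0`, axiom 2XM3 with a last argument in the image of
`∂₂` loses its correction term, and together with 2XM1 and 2XM2 it shows that `▶'` is compatible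
with the multiplications: `e ▶' (l l') = (e ▶' l) l'`, `(e e') ▶' l = e ▶' (e' ▶' l)` and
`l (e ▶' l') = (e ▶' l) l'`. The action of `(e, l)` is `e ▶' -` plus multiplication by `l`, and
expanding `(e, l) ▶* ((e', l') ▶* l'')` with these three rules gives exactly the action of the
product `(e e', e ▶' l' + e' ▶' l + l l')`.
-/

namespace TwoCrossedModule

variable {k L E R : Type*} [CommRing k] [CommRing L] [CommRing E] [CommRing R]
    [Algebra k L] [Algebra k E] [Algebra k R] (T : TwoCrossedModule k L E R)

def semidirectAct (p : E × L) (l' : L) : L :=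
  T.lift p.1 (T.d2 l') + p.2 * l'

def semidirectMul (p q : E × L) : E × L :=
  (p.1 * q.1, T.lift p.1 (T.d2 q.2) + T.lift q.1 (T.d2 p.2) + p.2 * q.2)

lemma d2_lift_d2 (e : E) (l : L) : T.d2 (T.lift e (T.d2 l)) = e * T.d2 l := by
  rw [T.axm1, T.comp, map_zero, LinearMap.zero_apply, sub_zero]

lemma lift_mul_d2 (e e' : E) (l : L) : T.lift e (e' * T.d2 l) = T.lift (e * e') (T.d2 l) := by
  rw [T.axm3, T.comp, map_zero, LinearMap.zero_apply, add_zero]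

lemma lift_d2_mul_d2 (e : E) (l l' : L) :
    T.lift e (T.d2 l * T.d2 l') = T.lift e (T.d2 l) * l' := by
  rw [lift_mul_d2, ← d2_lift_d2, T.axm2]

lemma mul_lift_d2 (e : E) (l l' : L) : l * T.lift e (T.d2 l') = T.lift e (T.d2 l) * l' := by
  rw [← lift_d2_mul_d2, mul_comm, ← lift_d2_mul_d2, mul_comm]

lemma semidirectAct_mul (p : E × L) (l l' : L) :
    T.semidirectAct p (l * l') = T.semidirectAct p l * l' := by
  rw [semidirectAct, semidirectAct, T.d2_mul, lift_d2_mul_d2, add_mul, mul_assoc]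

lemma semidirectAct_semidirectMul (p q : E × L) (l : L) :
    T.semidirectAct (T.semidirectMul p q) l = T.semidirectAct p (T.semidirectAct q l) := by
  obtain ⟨e, l₁⟩ := p
  obtain ⟨e', l₂⟩ := q
  simp only [semidirectAct, semidirectMul]
  rw [map_add, d2_lift_d2, T.d2_mul, map_add, lift_mul_d2, lift_d2_mul_d2, mul_add,
    mul_lift_d2]
  ring

end TwoCrossedModule

/-- `(e,l) ▶* l' = e▶'l' + ll'` is an algebra action of `E ⋉ L` on `L`. -/
theorem stmt9 (k L E R : Type*) [CommRing k] [CommRing L] [CommRing E] [CommRing R]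
    [Algebra k L] [Algebra k E] [Algebra k R] (T : TwoCrossedModule k L E R) :
    ∀ (m2 : E × L → E × L → E × L) (star : E × L → L → L),
      (m2 = fun p q => (p.1 * q.1,
        T.lift p.1 (T.d2 q.2) + T.lift q.1 (T.d2 p.2) + p.2 * q.2)) →
      (star = fun p l' => T.lift p.1 (T.d2 l') + p.2 * l') →
      (∀ p p' l, star (p + p') l = star p l + star p' l) ∧
      (∀ p l l', star p (l + l') = star p l + star p l') ∧
      (∀ (c : k) p l, star (c • p) l = c • star p l) ∧
      (∀ (c : k) p l, star p (c • l) = c • star p l) ∧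
      (∀ p l l', star p (l * l') = star p l * l') ∧
      (∀ p p' l, star (m2 p p') l = star p (star p' l)) := by
  rintro m2 star rfl rfl
  refine ⟨?_, ?_, ?_, ?_, T.semidirectAct_mul, T.semidirectAct_semidirectMul⟩
  · intro p p' l
    simp only [Prod.fst_add, Prod.snd_add, map_add, LinearMap.add_apply, add_mul]
    abel
  · intro p l l'
    simp only [map_add, mul_add]
    abel
  · intro c p l
    simp only [Prod.smul_fst, Prod.smul_snd, map_smul, LinearMap.smul_apply, smul_add,
      smul_mul_assoc]
  · intro c p l
    simp only [map_smul, smul_add, mul_smul_comm]
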